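/- arXiv:1512.04160 — 5 statements merged into one kernel-verified Lean document; each statement's English description precedes it below -/
import Mathlib

section
/- For a connected graph Γ with at least two vertices, the smallest eigenvalue δ_min of its distance matrix satisfies -δ_min ≥ D, where D is the diameter of Γ; moreover, equality -δ_min = D can only occur if D ∈ {1, 2}. -/
open SimpleGraph Matrix Finset

/-- The distance matrix of a graph, with real entries. -/
noncomputable def distMatrix {V : Type*} [Fintype V] (G : SimpleGraph V) : Matrix V V ℝ :=
  Matrix.of fun x y => (G.dist x y : ℝ)

lemma distMatrix_isHermitian {V : Type*} [Fintype V] (G : SimpleGraph V) :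
    (distMatrix G).IsHermitian := by
  ext x y
  simp [distMatrix, Matrix.conjTranspose_apply, SimpleGraph.dist_comm]

/-- The multiset of eigenvalues (with multiplicity) of the distance matrix of `G`. -/
noncomputable def distSpec {V : Type*} [Fintype V] [DecidableEq V] (G : SimpleGraph V) :
    Multiset ℝ :=
  Finset.univ.val.map (distMatrix_isHermitian G).eigenvalues

/-!
Take `x, y` at distance `D` and `v = e_x - e_y`. Then `vᵀ D(Γ) v = -2D` and `vᵀ v = 2`, so the
Rayleigh quotient bound gives `δ_min ≤ -D`. If `-δ_min = D`, then `v` minimises the Rayleigh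
quotient and is therefore a `δ_min`-eigenvector; row `z ∉ {x, y}` of `D(Γ) v = δ_min v` says
`d(z, x) = d(z, y)`. For `z` the neighbour of `x` on a geodesic to `y` this forces `D ≤ 2`.
-/

open scoped MatrixOrder ComplexOrder in
theorem Matrix.IsHermitian.posSemidef_sub_smul_one {n 𝕜 : Type*} [Fintype n] [DecidableEq n]
    [RCLike 𝕜] {A : Matrix n n 𝕜} (hA : A.IsHermitian) {c : ℝ}
    (hc : ∀ i, c ≤ hA.eigenvalues i) : (A - c • (1 : Matrix n n 𝕜)).PosSemidef := by
  rw [← Algebra.algebraMap_eq_smul_one, ← Matrix.le_iff,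
    algebraMap_le_iff_le_spectrum (ha := hA.isSelfAdjoint), hA.spectrum_real_eq_range_eigenvalues]
  rintro _ ⟨i, rfl⟩
  exact hc i

namespace SimpleGraph.Reachable

variable {V : Type*} {G : SimpleGraph V}

theorem exists_adj_dist_add_one_eq {u v : V} (h : G.Reachable u v) (hne : u ≠ v) :
    ∃ w, G.Adj u w ∧ G.dist w v + 1 = G.dist u v := by
  obtain ⟨p, hp⟩ := h.exists_walk_length_eq_dist
  cases p with
  | nil => exact absurd rfl hne
  | @cons _ w _ hadj q =>
    refine ⟨w, hadj, le_antisymm ?_ ?_⟩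
    · rw [← hp, Walk.length_cons]
      exact Nat.add_le_add_right (dist_le q) 1
    · have := hadj.reachable.dist_triangle_left v
      rwa [dist_eq_one_iff_adj.mpr hadj, add_comm] at this

theorem dist_eq_one_or_two_of_forall_dist_eq {x y : V} (h : G.Reachable x y) (hne : x ≠ y)
    (hequi : ∀ z, z ≠ x → z ≠ y → G.dist z x = G.dist z y) :
    G.dist x y = 1 ∨ G.dist x y = 2 := by
  obtain ⟨w, hadj, hw⟩ := h.exists_adj_dist_add_one_eq hne
  by_cases hwy : w = y
  · exact .inl (dist_eq_one_iff_adj.mpr (hwy ▸ hadj))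
  · have hwx : G.dist w x = 1 := dist_eq_one_iff_adj.mpr hadj.symm
    rw [hequi w hadj.ne.symm hwy] at hwx
    omega

end SimpleGraph.Reachable

section distMatrix

variable {V : Type*} [Fintype V] [DecidableEq V] (G : SimpleGraph V)

lemma single_sub_single_dotProduct_self {R : Type*} [Ring R] {x y : V} (hne : x ≠ y) :
    (Pi.single x 1 - Pi.single y 1 : V → R) ⬝ᵥ (Pi.single x 1 - Pi.single y 1) = 2 := by
  simp [dotProduct_sub, hne, hne.symm, one_add_one_eq_two]

lemma distMatrix_mulVec_single_sub_single (x y : V) :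
    distMatrix G *ᵥ (Pi.single x 1 - Pi.single y 1) = fun z => (G.dist z x : ℝ) - G.dist z y := by
  ext z
  simp [mulVec_sub, mulVec_single, distMatrix]

lemma single_sub_single_dotProduct_distMatrix_mulVec (x y : V) :
    (Pi.single x 1 - Pi.single y 1) ⬝ᵥ distMatrix G *ᵥ (Pi.single x 1 - Pi.single y 1) =
      -2 * (G.dist x y : ℝ) := by
  rw [distMatrix_mulVec_single_sub_single, sub_dotProduct, single_dotProduct, single_dotProduct]
  simp [dist_comm (u := y)]
  ring

lemma single_sub_single_dotProduct_distMatrix_sub_smul_mulVec {x y : V} (hne : x ≠ y) (c : ℝ) :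
    (Pi.single x 1 - Pi.single y 1) ⬝ᵥ (distMatrix G - c • 1) *ᵥ (Pi.single x 1 - Pi.single y 1) =
      2 * (-c - G.dist x y) := by
  rw [sub_mulVec, dotProduct_sub, single_sub_single_dotProduct_distMatrix_mulVec, smul_mulVec,
    one_mulVec, dotProduct_smul, single_sub_single_dotProduct_self hne, smul_eq_mul]
  ring

end distMatrix

theorem dcube_stmt0_general {V : Type*} [Fintype V] [DecidableEq V] (G : SimpleGraph V)
    (hn : 2 ≤ Fintype.card V) (hconn : G.Connected) (δmin : ℝ)
    (hmin : ∀ μ ∈ distSpec G, δmin ≤ μ) :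
    (G.diam : ℝ) ≤ -δmin ∧ (-δmin = (G.diam : ℝ) → G.diam = 1 ∨ G.diam = 2) := by
  have : Nontrivial V := Fintype.one_lt_card_iff_nontrivial.mp hn
  obtain ⟨x, y, hxy⟩ := G.exists_dist_eq_diam
  have hne : x ≠ y := by
    rintro rfl
    exact diam_ne_zero_of_ediam_ne_top (connected_iff_ediam_ne_top.mp hconn) (hxy ▸ dist_self)
  have hpsd : (distMatrix G - δmin • 1).PosSemidef :=
    (distMatrix_isHermitian G).posSemidef_sub_smul_one fun i =>
      hmin _ (Multiset.mem_map_of_mem _ (mem_univ i))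
  set v : V → ℝ := Pi.single x 1 - Pi.single y 1
  have hquad := single_sub_single_dotProduct_distMatrix_sub_smul_mulVec G hne δmin
  rw [hxy] at hquad
  refine ⟨by linarith [star_trivial v ▸ hpsd.dotProduct_mulVec_nonneg v], fun heq => ?_⟩
  have hker : (distMatrix G - δmin • 1) *ᵥ v = 0 :=
    (hpsd.dotProduct_mulVec_zero_iff v).mp (by rw [star_trivial, hquad, heq, sub_self, mul_zero])
  rw [← hxy]
  refine (hconn x y).dist_eq_one_or_two_of_forall_dist_eq hne fun z hzx hzy => ?_
  simpa only [v, sub_mulVec, distMatrix_mulVec_single_sub_single, smul_mulVec, one_mulVec,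
    Pi.sub_apply, Pi.smul_apply, Pi.single_eq_of_ne hzx, Pi.single_eq_of_ne hzy, sub_zero,
    smul_zero, Pi.zero_apply, sub_eq_zero, Nat.cast_inj] using congrFun hker z

theorem dcube_stmt0 {V : Type*} [Fintype V] [DecidableEq V] (G : SimpleGraph V)
    (hn : 2 ≤ Fintype.card V) (hconn : G.Connected) (δmin : ℝ)
    (hmem : δmin ∈ distSpec G) (hmin : ∀ μ ∈ distSpec G, δmin ≤ μ) :
    (G.diam : ℝ) ≤ -δmin ∧ (-δmin = (G.diam : ℝ) → G.diam = 1 ∨ G.diam = 2) :=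
  dcube_stmt0_general G hn hconn δmin hmin
end

section
/- For a connected graph Γ with n ≥ 2 vertices, the smallest distance eigenvalue equals -2 if and only if Γ is a complete multipartite graph K_{a_1,...,a_s} with some part of size at least 2; in that case the multiplicity of -2 equals n - s. -/
/-!
The smallest distance eigenvalue is at least `-2` exactly when `D + 2I` is positive semidefinite,
and the multiplicity of `-2` is `n - rank (D + 2I)`. If non-adjacency were not transitive, there
would be vertices `x, y, z` with `x ~ z` and `y` adjacent to neither, and the test vector
`e_x - 2 e_y + e_z` would give `(D + 2I)` the value `14 - 4 (d(x,y) + d(y,z)) < 0`; so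
positive semidefiniteness forces `G` to be complete multipartite. Conversely, if `c : V → Q` sends
each vertex to its part, then `D + 2I` is the pullback along `c` of the positive definite matrix
`I + J` on `Q`, hence positive semidefinite of rank `s = |Q|`, and `-2` is an eigenvalue iff
`s < n`, i.e. iff some part has at least two vertices.
-/

open SimpleGraph Matrix Finset

open scoped ComplexOrder

namespace Matrix

theorem rank_submatrix_of_surjective {m n m₀ n₀ R : Type*} [Fintype n] [Fintype n₀]
    [CommSemiring R] [StrongRankCondition R] (A : Matrix m n R) {r : m₀ → m} {c : n₀ → n}
    (hr : Function.Surjective r) (hc : Function.Surjective c) :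
    (A.submatrix r c).rank = A.rank := by
  refine le_antisymm (A.rank_submatrix_le r c) ?_
  calc A.rank
      = ((A.submatrix r c).submatrix (Function.surjInv hr) (Function.surjInv hc)).rank := by
        rw [submatrix_submatrix, (Function.rightInverse_surjInv hr).comp_eq_id,
          (Function.rightInverse_surjInv hc).comp_eq_id, submatrix_id_id]
    _ ≤ (A.submatrix r c).rank := rank_submatrix_le _ _ _

theorem posDef_one_add_vecMulVec_one {n : Type*} [Fintype n] [DecidableEq n] :
    (1 + vecMulVec 1 1 : Matrix n n ℝ).PosDef :=
  PosDef.one.add_posSemidef (by simpa using posSemidef_vecMulVec_self_star (1 : n → ℝ))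

namespace IsHermitian

variable {n 𝕜 : Type*} [Fintype n] [DecidableEq n] [RCLike 𝕜] {A : Matrix n n 𝕜}

theorem spectral_theorem_sub_smul_one (hA : A.IsHermitian) (μ : ℝ) :
    A - μ • 1 = (hA.eigenvectorUnitary : Matrix n n 𝕜) *
      diagonal (fun i => ((hA.eigenvalues i - μ : ℝ) : 𝕜)) *
        star (hA.eigenvectorUnitary : Matrix n n 𝕜) := by
  have hdiag : diagonal (fun i => ((hA.eigenvalues i - μ : ℝ) : 𝕜)) =
      diagonal (RCLike.ofReal ∘ hA.eigenvalues) - μ • 1 := by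
    ext i j
    by_cases h : i = j <;> simp [h, RCLike.real_smul_eq_coe_mul]
  conv_lhs => rw [hA.spectral_theorem]
  rw [hdiag, mul_sub, sub_mul, Matrix.mul_smul, mul_one, Matrix.smul_mul,
    Unitary.mul_star_self_of_mem hA.eigenvectorUnitary.2, Unitary.conjStarAlgAut_apply]

theorem rank_sub_smul_one (hA : A.IsHermitian) (μ : ℝ) :
    (A - μ • 1).rank = Fintype.card {i // hA.eigenvalues i ≠ μ} := by
  rw [hA.spectral_theorem_sub_smul_one, ← Unitary.coe_star]
  simp [-isUnit_iff_ne_zero, -Unitary.coe_star, rank_diagonal, sub_eq_zero]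

theorem posSemidef_sub_smul_one_iff (hA : A.IsHermitian) (μ : ℝ) :
    (A - μ • 1).PosSemidef ↔ ∀ i, μ ≤ hA.eigenvalues i := by
  rw [hA.spectral_theorem_sub_smul_one]
  simp [Unitary.isUnit_coe.posSemidef_star_right_conjugate_iff, posSemidef_diagonal_iff]

theorem count_map_eigenvalues (hA : A.IsHermitian) (μ : ℝ) :
    (univ.val.map hA.eigenvalues).count μ = Fintype.card n - (A - μ • 1).rank := by
  rw [hA.rank_sub_smul_one, Fintype.card_subtype_compl,
    Nat.sub_sub_self (Fintype.card_subtype_le _), Multiset.count_map, Fintype.card_subtype]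
  simp only [eq_comm]
  rfl

end IsHermitian

end Matrix

theorem Fintype.exists_two_le_iff_card_lt_sum {ι : Type*} [Fintype ι] {a : ι → ℕ}
    (ha : ∀ i, 0 < a i) : (∃ i, 2 ≤ a i) ↔ Fintype.card ι < ∑ i, a i := by
  constructor
  · rintro ⟨i, hi⟩
    rw [Fintype.card_eq_sum_ones]
    exact Finset.sum_lt_sum (fun i _ => ha i) ⟨i, mem_univ _, hi⟩
  · intro h
    rw [Fintype.card_eq_sum_ones] at h
    obtain ⟨i, -, hi⟩ := Finset.exists_lt_of_sum_lt h
    exact ⟨i, hi⟩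

section distSpec

variable {V : Type*} [Fintype V] [DecidableEq V] (G : SimpleGraph V)

theorem count_neg_two_distSpec :
    (distSpec G).count (-2) = Fintype.card V - (distMatrix G + (2 : ℝ) • 1).rank := by
  rw [distSpec, (distMatrix_isHermitian G).count_map_eigenvalues, neg_smul, sub_neg_eq_add]

theorem neg_two_le_distSpec_iff :
    (∀ μ ∈ distSpec G, -2 ≤ μ) ↔ (distMatrix G + (2 : ℝ) • 1).PosSemidef := by
  rw [← sub_neg_eq_add, ← neg_smul, (distMatrix_isHermitian G).posSemidef_sub_smul_one_iff]
  simp [distSpec]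

end distSpec

namespace SimpleGraph

variable {V Q : Type*} {G : SimpleGraph V} {c : V → Q}

structure IsCompleteMultipartiteLabeling (G : SimpleGraph V) (c : V → Q) : Prop where
  surjective : Function.Surjective c
  adj_iff : ∀ x y, G.Adj x y ↔ c x ≠ c y

theorem IsCompleteMultipartite.isCompleteMultipartiteLabeling_mk
    (h : G.IsCompleteMultipartite) : G.IsCompleteMultipartiteLabeling (Quotient.mk h.setoid) where
  surjective := Quotient.mk_surjective
  adj_iff x y := by
    rw [Ne, Quotient.eq]
    exact not_not.symm

theorem IsCompleteMultipartiteLabeling.of_iso {ι : Type*} {W : ι → Type*}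
    (hW : ∀ i, Nonempty (W i)) (e : G ≃g completeMultipartiteGraph W) :
    G.IsCompleteMultipartiteLabeling fun v => (e v).1 where
  surjective i := ⟨e.symm ⟨i, (hW i).some⟩, by simp⟩
  adj_iff x y := e.map_rel_iff.symm

theorem card_eq_sum_card_of_iso_completeMultipartiteGraph [Fintype V] {ι : Type*} [Fintype ι]
    {W : ι → Type*} [∀ i, Fintype (W i)] (e : G ≃g completeMultipartiteGraph W) :
    Fintype.card V = ∑ i, Fintype.card (W i) := by
  rw [Fintype.card_congr e.toEquiv, Fintype.card_sigma]

theorem IsCompleteMultipartiteLabeling.exists_iso_fin [Fintype V] [Fintype Q]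
    (hc : G.IsCompleteMultipartiteLabeling c) :
    ∃ a : Fin (Fintype.card Q) → ℕ, (∀ i, 0 < a i) ∧
      Nonempty (G ≃g completeMultipartiteGraph fun i => Fin (a i)) := by
  classical
  let c' := Fintype.equivFin Q ∘ c
  refine ⟨fun i => Fintype.card {v // c' v = i}, fun i => ?_,
    ⟨⟨(Equiv.sigmaFiberEquiv c').symm.trans (Equiv.sigmaCongrRight fun i => Fintype.equivFin _),
      ?_⟩⟩⟩
  · obtain ⟨v, hv⟩ := hc.surjective ((Fintype.equivFin Q).symm i)
    exact Fintype.card_pos_iff.2 ⟨⟨v, by simp [c', hv]⟩⟩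
  · intro u v
    simp [hc.adj_iff, c']

theorem IsCompleteMultipartiteLabeling.dist_eq [DecidableEq Q]
    (hc : G.IsCompleteMultipartiteLabeling c) (hconn : G.Connected) {x y : V} (hxy : x ≠ y) :
    G.dist x y = if c x = c y then 2 else 1 := by
  split_ifs with hcxy
  · have hnadj : ¬ G.Adj x y := fun h => (hc.adj_iff x y).1 h hcxy
    have : Nontrivial V := ⟨⟨x, y, hxy⟩⟩
    obtain ⟨z, hxz⟩ := hconn.preconnected.exists_adj_of_nontrivial x
    have hzy : G.Adj z y := (hc.adj_iff z y).2 (hcxy ▸ ((hc.adj_iff x z).1 hxz).symm)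
    have hle := dist_le (.cons hxz (.cons hzy .nil))
    have hgt := hconn.one_lt_dist_of_ne_of_not_adj hxy hnadj
    simp only [Walk.length_cons, Walk.length_nil] at hle
    omega
  · exact dist_eq_one_iff_adj.2 ((hc.adj_iff x y).2 hcxy)

variable [Fintype V] [DecidableEq V] [DecidableEq Q]

theorem isCompleteMultipartite_of_posSemidef (hconn : G.Connected)
    (h : (distMatrix G + (2 : ℝ) • 1).PosSemidef) : G.IsCompleteMultipartite := by
  refine ⟨fun x y z hxy hyz hxz => ?_⟩
  have hyx : y ≠ x := by rintro rfl; exact hyz hxz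
  have hyz' : y ≠ z := by rintro rfl; exact hxy hxz
  have h₁ := hconn.one_lt_dist_of_ne_of_not_adj hyx.symm hxy
  have h₂ := hconn.one_lt_dist_of_ne_of_not_adj hyz' hyz
  have hform : star ![1, -2, 1] ⬝ᵥ
      ((distMatrix G + (2 : ℝ) • 1).submatrix ![x, y, z] ![x, y, z] *ᵥ ![1, -2, 1]) =
        14 - 4 * ((G.dist x y : ℝ) + G.dist y z) := by
    simp only [dotProduct, Pi.star_apply, star_trivial, mulVec, distMatrix, submatrix_apply,
      Matrix.add_apply, of_apply, Matrix.smul_apply, one_apply, smul_eq_mul, Fin.sum_univ_three,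
      cons_val_zero, cons_val_one, Matrix.cons_val, dist_comm, dist_self,
      dist_eq_one_iff_adj.2 hxz, hyx, hyz', hyx.symm, hyz'.symm, G.ne_of_adj hxz,
      (G.ne_of_adj hxz).symm, if_true, if_false]
    push_cast
    ring
  have hq := (h.submatrix ![x, y, z]).dotProduct_mulVec_nonneg ![1, -2, 1]
  have : (2 : ℝ) ≤ G.dist x y := by exact_mod_cast h₁
  have : (2 : ℝ) ≤ G.dist y z := by exact_mod_cast h₂
  linarith

theorem IsCompleteMultipartiteLabeling.distMatrix_add_two_smul_one
    (hc : G.IsCompleteMultipartiteLabeling c) (hconn : G.Connected) :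
    distMatrix G + (2 : ℝ) • 1 = (1 + vecMulVec 1 1 : Matrix Q Q ℝ).submatrix c c := by
  ext x y
  rcases eq_or_ne x y with rfl | hxy
  · simp [distMatrix, one_add_one_eq_two]
  · have := hc.dist_eq hconn hxy
    by_cases hcxy : c x = c y <;> simp_all [distMatrix, one_apply, one_add_one_eq_two]

theorem IsCompleteMultipartiteLabeling.posSemidef_distMatrix_add_two_smul_one [Fintype Q]
    (hc : G.IsCompleteMultipartiteLabeling c) (hconn : G.Connected) :
    (distMatrix G + (2 : ℝ) • 1).PosSemidef := by
  rw [hc.distMatrix_add_two_smul_one hconn]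
  exact posDef_one_add_vecMulVec_one.posSemidef.submatrix c

theorem IsCompleteMultipartiteLabeling.rank_distMatrix_add_two_smul_one [Fintype Q]
    (hc : G.IsCompleteMultipartiteLabeling c) (hconn : G.Connected) :
    (distMatrix G + (2 : ℝ) • 1).rank = Fintype.card Q := by
  rw [hc.distMatrix_add_two_smul_one hconn,
    rank_submatrix_of_surjective _ hc.surjective hc.surjective,
    rank_of_isUnit _ posDef_one_add_vecMulVec_one.isUnit]

theorem IsCompleteMultipartiteLabeling.count_neg_two_distSpec [Fintype Q]
    (hc : G.IsCompleteMultipartiteLabeling c) (hconn : G.Connected) :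
    (distSpec G).count (-2) = Fintype.card V - Fintype.card Q := by
  rw [_root_.count_neg_two_distSpec, hc.rank_distMatrix_add_two_smul_one hconn]

end SimpleGraph

theorem dcube_stmt2_general {V : Type*} [Fintype V] [DecidableEq V] (G : SimpleGraph V)
    (hconn : G.Connected) (δmin : ℝ)
    (hmem : δmin ∈ distSpec G) (hmin : ∀ μ ∈ distSpec G, δmin ≤ μ) :
    δmin = -2 ↔
      ∃ (s : ℕ) (a : Fin s → ℕ), (∀ i, 0 < a i) ∧ (∃ i, 2 ≤ a i) ∧
        Nonempty (G ≃g completeMultipartiteGraph fun i => Fin (a i)) ∧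
        (distSpec G).count (-2) = Fintype.card V - s := by
  classical
  constructor
  · rintro rfl
    have hc := (isCompleteMultipartite_of_posSemidef hconn
      ((neg_two_le_distSpec_iff G).1 hmin)).isCompleteMultipartiteLabeling_mk
    have hcount := hc.count_neg_two_distSpec hconn
    obtain ⟨a, ha, ⟨e⟩⟩ := hc.exists_iso_fin
    have hpos := Multiset.count_pos.2 hmem
    refine ⟨_, a, ha, (Fintype.exists_two_le_iff_card_lt_sum ha).2 ?_, ⟨e⟩, hcount⟩
    rw [hcount, card_eq_sum_card_of_iso_completeMultipartiteGraph e] at hpos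
    simpa using hpos
  · rintro ⟨s, a, ha, hbig, ⟨e⟩, -⟩
    have hc := IsCompleteMultipartiteLabeling.of_iso (fun i => ⟨⟨0, ha i⟩⟩) e
    have hlt := (Fintype.exists_two_le_iff_card_lt_sum ha).1 hbig
    have hmem₂ : (-2 : ℝ) ∈ distSpec G := by
      rw [← Multiset.count_pos, hc.count_neg_two_distSpec hconn,
        card_eq_sum_card_of_iso_completeMultipartiteGraph e]
      simpa using hlt
    exact le_antisymm (hmin _ hmem₂)
      ((neg_two_le_distSpec_iff G).2 (hc.posSemidef_distMatrix_add_two_smul_one hconn) _ hmem)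

theorem dcube_stmt2 {V : Type*} [Fintype V] [DecidableEq V] (G : SimpleGraph V)
    (hn : 2 ≤ Fintype.card V) (hconn : G.Connected) (δmin : ℝ)
    (hmem : δmin ∈ distSpec G) (hmin : ∀ μ ∈ distSpec G, δmin ≤ μ) :
    δmin = -2 ↔
      ∃ (s : ℕ) (a : Fin s → ℕ), (∀ i, 0 < a i) ∧ (∃ i, 2 ≤ a i) ∧
        Nonempty (G ≃g completeMultipartiteGraph fun i => Fin (a i)) ∧
        (distSpec G).count (-2) = Fintype.card V - s :=
  dcube_stmt2_general G hconn δmin hmem hmin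
end

section
/- For a connected graph Γ with n ≥ 2 vertices, the following are equivalent: (i) the second largest distance eigenvalue δ_1 < 1 - √3; (ii) δ_1 = -1; (iii) Γ is the complete graph K_n; (iv) the distance spectral radius δ_0 = n - 1. -/
open SimpleGraph Matrix Finset

/-!
The distance matrix of `K_n` is `J - I`, with eigenvalue `n - 1` once and `-1` with
multiplicity `n - 1`. A connected graph that is not complete contains an induced path
`u - w - v`, so `d(u, v) = 2`. On the plane spanned by `e_u + e_v` and `e_w` the distance
quadratic form is at least `1 - √3` times the squared norm (`1 - √3` is the second distance
eigenvalue of that path). If only one eigenvalue were `≥ 1 - √3`, a vector of this plane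
orthogonal to its eigenvector would have a smaller Rayleigh quotient; hence `δ₁ ≥ 1 - √3 > -1`. The all-ones vector has Rayleigh quotient `> n - 1`, so `δ₀ > n - 1`.
-/

namespace Matrix.IsHermitian

variable {n : Type*} [Fintype n] [DecidableEq n] {A : Matrix n n ℝ} (hA : A.IsHermitian)

theorem map_eigenvalues_eq_map_eigenvalues₀ :
    Finset.univ.val.map hA.eigenvalues = Finset.univ.val.map hA.eigenvalues₀ := by
  simpa using hA.roots_charpoly_eq_eigenvalues.symm.trans hA.roots_charpoly_eq_eigenvalues₀

theorem reverse_sort_map_eigenvalues :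
    ((Finset.univ.val.map hA.eigenvalues).sort (· ≤ ·)).reverse = List.ofFn hA.eigenvalues₀ := by
  have hsorted : (List.ofFn hA.eigenvalues₀).reverse.Pairwise (· ≤ ·) :=
    List.pairwise_reverse.mpr
      (List.sortedGE_iff_pairwise.mp hA.eigenvalues₀_antitone.sortedGE_ofFn)
  rw [map_eigenvalues_eq_map_eigenvalues₀, Fin.univ_val_map, ← Multiset.coe_reverse,
    Multiset.coe_sort, List.mergeSort_of_pairwise (by simpa using hsorted), List.reverse_reverse]

theorem eigenvalues₀_eq_eigenvalues (k : Fin (Fintype.card n)) :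
    hA.eigenvalues₀ k = hA.eigenvalues (Fintype.equivOfCardEq (Fintype.card_fin _) k) := by
  simp [eigenvalues]

theorem exists_mulVec_eq_eigenvalues₀_smul (k : Fin (Fintype.card n)) :
    ∃ v : n → ℝ, v ≠ 0 ∧ A *ᵥ v = hA.eigenvalues₀ k • v := by
  rw [eigenvalues₀_eq_eigenvalues]
  exact ⟨_, (WithLp.ofLp_eq_zero 2).ne.2 (hA.eigenvectorBasis.orthonormal.ne_zero _),
    hA.mulVec_eigenvectorBasis _⟩

theorem sum_eigenvalues₀ : ∑ k, hA.eigenvalues₀ k = A.trace := by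
  simp_rw [eigenvalues₀_eq_eigenvalues, Equiv.sum_comp, hA.trace_eq_sum_eigenvalues]
  simp

theorem eigenvalues_le_eigenvalues₀_zero (h : 0 < Fintype.card n) (i : n) :
    hA.eigenvalues i ≤ hA.eigenvalues₀ ⟨0, h⟩ :=
  hA.eigenvalues₀_antitone (Nat.zero_le _)

theorem le_eigenvalues₀_one (h : 1 < Fintype.card n) {c : ℝ} {i j : n} (hij : i ≠ j)
    (hi : c ≤ hA.eigenvalues i) (hj : c ≤ hA.eigenvalues j) :
    c ≤ hA.eigenvalues₀ ⟨1, h⟩ := by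
  set e := (Fintype.equivOfCardEq (Fintype.card_fin (Fintype.card n))).symm
  have hne : e i ≠ e j := e.injective.ne hij
  rcases Nat.eq_zero_or_pos (e i).val with hi0 | hi0
  · have hj0 : (e j).val ≠ 0 := fun hj0 => hne (Fin.ext (hi0.trans hj0.symm))
    exact hj.trans (hA.eigenvalues₀_antitone (Nat.one_le_iff_ne_zero.mpr hj0))
  · exact hi.trans (hA.eigenvalues₀_antitone hi0)

theorem star_eigenvectorUnitary_eq_transpose :
    star (hA.eigenvectorUnitary : Matrix n n ℝ) = (hA.eigenvectorUnitary : Matrix n n ℝ)ᵀ :=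
  conjTranspose_eq_transpose_of_trivial _

theorem sum_sq_eigenvectorUnitary_transpose_mulVec (x : n → ℝ) :
    ∑ i, ((hA.eigenvectorUnitary : Matrix n n ℝ)ᵀ *ᵥ x) i ^ 2 = x ⬝ᵥ x := by
  set U := (hA.eigenvectorUnitary : Matrix n n ℝ)
  have hU : U * Uᵀ = 1 := by
    rw [← hA.star_eigenvectorUnitary_eq_transpose]
    exact Unitary.mul_star_self_of_mem hA.eigenvectorUnitary.2
  simp_rw [sq, ← dotProduct.eq_1, dotProduct_mulVec, ← mulVec_transpose, transpose_transpose,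
    mulVec_mulVec, hU, one_mulVec]

theorem dotProduct_mulVec_eq_sum_eigenvalues_mul_sq (x : n → ℝ) :
    x ⬝ᵥ A *ᵥ x =
      ∑ i, hA.eigenvalues i * ((hA.eigenvectorUnitary : Matrix n n ℝ)ᵀ *ᵥ x) i ^ 2 := by
  set U := (hA.eigenvectorUnitary : Matrix n n ℝ)
  have hA' : A = U * diagonal hA.eigenvalues * Uᵀ := by
    conv_lhs => rw [hA.spectral_theorem, Unitary.conjStarAlgAut_apply]
    rw [hA.star_eigenvectorUnitary_eq_transpose]
    rfl
  conv_lhs => rw [hA']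
  rw [← mulVec_mulVec, ← mulVec_mulVec, dotProduct_mulVec, ← mulVec_transpose]
  simp only [dotProduct, mulVec_diagonal, sq]
  exact Finset.sum_congr rfl fun i _ => by ring

theorem dotProduct_mulVec_le_of_eigenvalues_le {M : ℝ} (hM : ∀ i, hA.eigenvalues i ≤ M)
    (x : n → ℝ) : x ⬝ᵥ A *ᵥ x ≤ M * (x ⬝ᵥ x) := by
  rw [hA.dotProduct_mulVec_eq_sum_eigenvalues_mul_sq,
    ← hA.sum_sq_eigenvectorUnitary_transpose_mulVec, Finset.mul_sum]
  exact Finset.sum_le_sum fun i _ => mul_le_mul_of_nonneg_right (hM i) (sq_nonneg _)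

theorem exists_lt_eigenvalues_of_lt_dotProduct_mulVec {M : ℝ} {x : n → ℝ}
    (h : M * (x ⬝ᵥ x) < x ⬝ᵥ A *ᵥ x) : ∃ i, M < hA.eigenvalues i := by
  by_contra! hM
  exact (hA.dotProduct_mulVec_le_of_eigenvalues_le hM x).not_gt h

theorem dotProduct_mulVec_lt_of_orthogonal {c : ℝ} {x : n → ℝ} (hx : x ≠ 0)
    (h : ∀ i, c ≤ hA.eigenvalues i → ((hA.eigenvectorUnitary : Matrix n n ℝ)ᵀ *ᵥ x) i = 0) :
    x ⬝ᵥ A *ᵥ x < c * (x ⬝ᵥ x) := by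
  rw [hA.dotProduct_mulVec_eq_sum_eigenvalues_mul_sq,
    ← hA.sum_sq_eigenvectorUnitary_transpose_mulVec, Finset.mul_sum]
  have hx' := hA.sum_sq_eigenvectorUnitary_transpose_mulVec x
  set y := (hA.eigenvectorUnitary : Matrix n n ℝ)ᵀ *ᵥ x
  obtain ⟨j, hj⟩ : ∃ j, y j ≠ 0 := by
    by_contra! hy
    rw [Finset.sum_eq_zero fun i _ => by simp [hy i], eq_comm, dotProduct_self_eq_zero] at hx'
    exact hx hx'
  have hlt : ∀ i, y i ≠ 0 → hA.eigenvalues i < c := fun i hi => not_le.mp (mt (h i) hi)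
  refine Finset.sum_lt_sum (fun i _ => ?_) ⟨j, Finset.mem_univ j,
    mul_lt_mul_of_pos_right (hlt j hj) (pow_two_pos_of_ne_zero hj)⟩
  by_cases hi : y i = 0
  · simp [hi]
  · exact mul_le_mul_of_nonneg_right (hlt i hi).le (sq_nonneg _)

theorem exists_ne_le_eigenvalues_of_linearIndependent {c : ℝ} {a b : n → ℝ}
    (hab : LinearIndependent ℝ ![a, b])
    (h : ∀ p q : ℝ, c * ((p • a + q • b) ⬝ᵥ (p • a + q • b)) ≤
      (p • a + q • b) ⬝ᵥ A *ᵥ (p • a + q • b)) :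
    ∃ i j, i ≠ j ∧ c ≤ hA.eigenvalues i ∧ c ≤ hA.eigenvalues j := by
  by_contra! hcon
  obtain ⟨i₀, hi₀⟩ : ∃ i₀, ∀ i, c ≤ hA.eigenvalues i → i = i₀ := by
    by_cases hex : ∃ i₀, c ≤ hA.eigenvalues i₀
    · obtain ⟨i₀, hi₀⟩ := hex
      exact ⟨i₀, fun i hi => by_contra fun hne => (hcon i₀ i (Ne.symm hne) hi₀).not_ge hi⟩
    · obtain ⟨i₀, -⟩ := Function.ne_iff.mp (hab.ne_zero 0)
      exact ⟨i₀, fun i hi => absurd ⟨i, hi⟩ hex⟩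
  set U := (hA.eigenvectorUnitary : Matrix n n ℝ)
  obtain ⟨p, q, hpq, horth⟩ : ∃ p q : ℝ, ¬(p = 0 ∧ q = 0) ∧
      p * (Uᵀ *ᵥ a) i₀ + q * (Uᵀ *ᵥ b) i₀ = 0 := by
    by_cases h0 : (Uᵀ *ᵥ a) i₀ = 0 ∧ (Uᵀ *ᵥ b) i₀ = 0
    · exact ⟨1, 0, by simp, by simp [h0.1]⟩
    · exact ⟨(Uᵀ *ᵥ b) i₀, -(Uᵀ *ᵥ a) i₀, fun h' => h0 ⟨neg_eq_zero.mp h'.2, h'.1⟩, by ring⟩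
  have hx : p • a + q • b ≠ 0 := fun h0 => hpq (LinearIndependent.pair_iff.mp hab p q h0)
  refine (h p q).not_gt (hA.dotProduct_mulVec_lt_of_orthogonal hx fun i hi => ?_)
  rw [hi₀ i hi]
  simpa [mulVec_add, mulVec_smul] using horth

end Matrix.IsHermitian

theorem SimpleGraph.Connected.exists_adj_adj_dist_eq_two {V : Type*} {G : SimpleGraph V}
    (hconn : G.Connected) (hG : G ≠ ⊤) : ∃ u w v, G.Adj u w ∧ G.Adj w v ∧ G.dist u v = 2 := by
  obtain ⟨a, b, hab, hnadj⟩ : ∃ a b, a ≠ b ∧ ¬G.Adj a b := by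
    by_contra! h
    exact hG (SimpleGraph.ext (funext₂ fun a b => propext ⟨G.ne_of_adj, h a b⟩))
  obtain ⟨p, hp⟩ := hconn.exists_walk_length_eq_dist a b
  have h1 : 1 < G.dist a b := by
    have := hconn.pos_dist_of_ne hab
    have : G.dist a b ≠ 1 := mt dist_eq_one_iff_adj.mp hnadj
    omega
  obtain ⟨u, w, v, huw, hwv, hnuv, hne⟩ := p.exists_adj_adj_not_adj_ne hp h1
  refine ⟨u, w, v, huw, hwv, le_antisymm (dist_le (huw.toWalk.concat hwv)) ?_⟩
  have := hconn.pos_dist_of_ne hne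
  have : G.dist u v ≠ 1 := mt dist_eq_one_iff_adj.mp hnuv
  omega

section distMatrix

variable {V : Type*} [Fintype V] {G : SimpleGraph V}

theorem distMatrix_apply (x y : V) : distMatrix G x y = G.dist x y := rfl

theorem trace_distMatrix : (distMatrix G).trace = 0 := by
  simp [Matrix.trace, distMatrix_apply]

variable [DecidableEq V]

theorem distMatrix_top_apply (x y : V) :
    distMatrix (⊤ : SimpleGraph V) x y = if x = y then 0 else 1 := by
  rw [distMatrix_apply, dist_top]; split_ifs <;> simp

theorem distMatrix_top_le (hconn : G.Connected) (x y : V) :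
    distMatrix ⊤ x y ≤ distMatrix G x y := by
  rw [distMatrix_top_apply]
  split_ifs with h
  · simp [distMatrix_apply, h]
  · exact Nat.one_le_cast.mpr (hconn.pos_dist_of_ne h)

theorem sum_distMatrix_top :
    ∑ x, ∑ y, distMatrix (⊤ : SimpleGraph V) x y = Fintype.card V * (Fintype.card V - 1) := by
  simp only [distMatrix_top_apply, sum_ite, sum_const_zero, filter_ne, sum_const, mem_univ,
    card_erase_of_mem, card_univ, nsmul_eq_mul, mul_one, zero_add, mul_eq_mul_left_iff,
    Nat.cast_eq_zero]
  exact (Fintype.card V).eq_zero_or_pos.symm.imp Nat.cast_pred id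

theorem card_mul_card_sub_one_lt_sum_distMatrix (hconn : G.Connected) (hG : G ≠ ⊤) :
    Fintype.card V * (Fintype.card V - 1 : ℝ) < ∑ x, ∑ y, distMatrix G x y := by
  obtain ⟨u, -, v, -, -, huv⟩ := hconn.exists_adj_adj_dist_eq_two hG
  have huv_lt : distMatrix ⊤ u v < distMatrix G u v := by
    rw [distMatrix_top_apply, distMatrix_apply, huv, if_neg (by rintro rfl; simp at huv)]
    norm_num
  rw [← sum_distMatrix_top]
  refine Finset.sum_lt_sum (fun x _ => Finset.sum_le_sum fun y _ => distMatrix_top_le hconn x y)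
    ⟨u, Finset.mem_univ u, Finset.sum_lt_sum (fun y _ => distMatrix_top_le hconn u y)
      ⟨v, Finset.mem_univ v, huv_lt⟩⟩

theorem eigenvalue_distMatrix_top {μ : ℝ} {v : V → ℝ} (hv : v ≠ 0)
    (h : distMatrix ⊤ *ᵥ v = μ • v) : μ = -1 ∨ μ = Fintype.card V - 1 := by
  have hrow : ∀ x, (μ + 1) * v x = ∑ y, v y := by
    intro x
    have := congrFun h x
    simp only [mulVec, dotProduct, distMatrix_top_apply, ite_mul, zero_mul, one_mul,
      Finset.sum_ite, Finset.filter_ne, Finset.sum_erase_eq_sub (Finset.mem_univ x),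
      Finset.sum_const_zero, Pi.smul_apply, smul_eq_mul] at this
    linarith
  by_cases hμ : μ + 1 = 0
  · exact Or.inl (by linarith)
  refine Or.inr ?_
  have hsum : ∑ y, v y ≠ 0 := by
    obtain ⟨x, hx⟩ := Function.ne_iff.mp hv
    rw [← hrow x]
    exact mul_ne_zero hμ hx
  have : (μ + 1) * ∑ y, v y = Fintype.card V * ∑ y, v y := by
    simp [Finset.mul_sum, hrow]
  linarith [mul_right_cancel₀ hsum this]

end distMatrix

theorem getD_reverse_sort_distSpec {V : Type*} [Fintype V] [DecidableEq V] (G : SimpleGraph V)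
    {k : ℕ} (hk : k < Fintype.card V) :
    ((distSpec G).sort (· ≤ ·)).reverse.getD k 0 =
      (distMatrix_isHermitian G).eigenvalues₀ ⟨k, hk⟩ := by
  rw [distSpec, Matrix.IsHermitian.reverse_sort_map_eigenvalues,
    List.getD_eq_getElem _ _ (by simpa using hk), List.getElem_ofFn]

section distSpectrum

variable {V : Type*} [Fintype V] [DecidableEq V]

theorem eigenvalues₀_distMatrix_top (hn : 2 ≤ Fintype.card V) :
    (distMatrix_isHermitian (⊤ : SimpleGraph V)).eigenvalues₀ ⟨0, by omega⟩ =
        Fintype.card V - 1 ∧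
      (distMatrix_isHermitian (⊤ : SimpleGraph V)).eigenvalues₀ ⟨1, hn⟩ = -1 := by
  set f := (distMatrix_isHermitian (⊤ : SimpleGraph V)).eigenvalues₀
  have hf : Antitone f := (distMatrix_isHermitian _).eigenvalues₀_antitone
  have hN : (2 : ℝ) ≤ Fintype.card V := by exact_mod_cast hn
  have hval : ∀ k, f k = -1 ∨ f k = Fintype.card V - 1 := fun k => by
    obtain ⟨v, hv, h⟩ := (distMatrix_isHermitian _).exists_mulVec_eq_eigenvalues₀_smul k
    exact eigenvalue_distMatrix_top hv h
  have hsum : ∑ k, (f k + 1) = Fintype.card V := by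
    rw [Finset.sum_add_distrib, Matrix.IsHermitian.sum_eigenvalues₀, trace_distMatrix]
    simp
  have hnonneg : ∀ k, 0 ≤ f k + 1 := fun k => by
    rcases hval k with h | h <;> rw [h] <;> linarith
  constructor
  · refine (hval _).resolve_left fun h0 => ?_
    have : ∑ k, (f k + 1) ≤ 0 :=
      Finset.sum_nonpos fun k _ => by
        linarith [hf (show (⟨0, by omega⟩ : Fin _) ≤ k from Nat.zero_le _)]
    linarith
  · refine (hval _).resolve_right fun h1 => ?_
    have h0 : f ⟨1, hn⟩ ≤ f ⟨0, by omega⟩ := hf (Nat.zero_le 1)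
    have : f ⟨0, by omega⟩ + 1 + (f ⟨1, hn⟩ + 1) ≤ ∑ k, (f k + 1) := by
      rw [← Finset.sum_pair (f := fun k => f k + 1)
        (show (⟨0, by omega⟩ : Fin _) ≠ ⟨1, hn⟩ by simp)]
      exact Finset.sum_le_sum_of_subset_of_nonneg (Finset.subset_univ _) fun k _ _ => hnonneg k
    linarith

variable {G : SimpleGraph V}

theorem card_sub_one_lt_eigenvalues₀_zero (hn : 0 < Fintype.card V) (hconn : G.Connected)
    (hG : G ≠ ⊤) : Fintype.card V - 1 < (distMatrix_isHermitian G).eigenvalues₀ ⟨0, hn⟩ := by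
  obtain ⟨i, hi⟩ := (distMatrix_isHermitian G).exists_lt_eigenvalues_of_lt_dotProduct_mulVec
    (x := fun _ => 1) (M := Fintype.card V - 1)
    (by simpa [dotProduct, mulVec, mul_comm] using
      card_mul_card_sub_one_lt_sum_distMatrix hconn hG)
  exact hi.trans_le ((distMatrix_isHermitian G).eigenvalues_le_eigenvalues₀_zero hn i)

theorem dotProduct_distMatrix_mulVec_of_adj_adj {u w v : V} (huw : G.Adj u w) (hwv : G.Adj w v)
    (huv : G.dist u v = 2) (p q : ℝ) :
    (p • (Pi.single u 1 + Pi.single v 1) + q • Pi.single w 1) ⬝ᵥ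
      distMatrix G *ᵥ (p • (Pi.single u 1 + Pi.single v 1) + q • Pi.single w 1) =
      4 * p ^ 2 + 4 * p * q := by
  simp only [mulVec_add, mulVec_smul, mulVec_single_one, add_dotProduct, dotProduct_add,
    smul_dotProduct, dotProduct_smul, single_dotProduct, col_apply, distMatrix_apply,
    dist_eq_one_iff_adj.mpr huw, dist_eq_one_iff_adj.mpr hwv, huv, dist_comm (u := w),
    dist_comm (u := v), SimpleGraph.dist_self]
  push_cast
  ring

theorem dotProduct_self_single_add_single {u w v : V} (huw : u ≠ w) (hwv : w ≠ v) (huv : u ≠ v)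
    (p q : ℝ) :
    (p • (Pi.single u 1 + Pi.single v 1) + q • Pi.single w 1) ⬝ᵥ
      (p • (Pi.single u 1 + Pi.single v 1) + q • (Pi.single w 1 : V → ℝ)) =
      2 * p ^ 2 + q ^ 2 := by
  simp only [smul_add, dotProduct_add, dotProduct_smul, dotProduct_single, Pi.add_apply,
    Pi.smul_apply, Pi.single_eq_same, Pi.single_eq_of_ne, smul_eq_mul, mul_one, mul_zero, add_zero,
    zero_add, ne_eq, not_false_eq_true, huw, hwv, huv, huw.symm, hwv.symm, huv.symm]
  ring

theorem one_sub_sqrt_three_le_eigenvalues₀_one (hn : 1 < Fintype.card V) (hconn : G.Connected)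
    (hG : G ≠ ⊤) : 1 - √3 ≤ (distMatrix_isHermitian G).eigenvalues₀ ⟨1, hn⟩ := by
  obtain ⟨u, w, v, huw, hwv, huv⟩ := hconn.exists_adj_adj_dist_eq_two hG
  have hne_uv : u ≠ v := by rintro rfl; simp at huv
  have hind : LinearIndependent ℝ ![Pi.single u 1 + Pi.single v 1, (Pi.single w 1 : V → ℝ)] := by
    refine LinearIndependent.pair_iff.mpr fun s t hst => ⟨?_, ?_⟩
    · simpa [huw.ne, hne_uv.symm] using congrFun hst u
    · simpa [huw.ne.symm, hwv.ne] using congrFun hst w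
  have hform : ∀ p q : ℝ, (1 - √3) * (2 * p ^ 2 + q ^ 2) ≤ 4 * p ^ 2 + 4 * p * q := fun p q => by
    have h3 : √3 ^ 2 = 3 := Real.sq_sqrt (by norm_num)
    have h1 : 1 ≤ √3 := Real.one_le_sqrt.mpr (by norm_num)
    have key : 4 * p ^ 2 + 4 * p * q - (1 - √3) * (2 * p ^ 2 + q ^ 2) =
        (√3 - 1) * ((1 + √3) * p + q) ^ 2 := by
      linear_combination (-((1 + √3) * p ^ 2 + 2 * p * q)) * h3
    rw [← sub_nonneg, key]
    exact mul_nonneg (sub_nonneg.mpr h1) (sq_nonneg _)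
  obtain ⟨i, j, hij, hi, hj⟩ :=
    (distMatrix_isHermitian G).exists_ne_le_eigenvalues_of_linearIndependent hind fun p q => by
      rw [dotProduct_distMatrix_mulVec_of_adj_adj huw hwv huv,
        dotProduct_self_single_add_single huw.ne hwv.ne hne_uv]
      exact hform p q
  exact (distMatrix_isHermitian G).le_eigenvalues₀_one hn hij hi hj

end distSpectrum

theorem dcube_stmt4 {V : Type*} [Fintype V] [DecidableEq V] (G : SimpleGraph V)
    (hn : 2 ≤ Fintype.card V) (hconn : G.Connected) (δ0 δ1 : ℝ)
    (hδ0 : δ0 = (((distSpec G).sort (· ≤ ·)).reverse).getD 0 0)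
    (hδ1 : δ1 = (((distSpec G).sort (· ≤ ·)).reverse).getD 1 0) :
    (δ1 < 1 - Real.sqrt 3 ↔ δ1 = -1) ∧ (δ1 = -1 ↔ G = ⊤) ∧
      (G = ⊤ ↔ δ0 = (Fintype.card V : ℝ) - 1) := by
  rw [getD_reverse_sort_distSpec G (by omega)] at hδ0
  rw [getD_reverse_sort_distSpec G hn] at hδ1
  have hsqrt : √3 < 2 := (Real.sqrt_lt' (by norm_num)).mpr (by norm_num)
  by_cases hG : G = ⊤
  · subst hG
    obtain ⟨h0, h1⟩ := eigenvalues₀_distMatrix_top hn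
    rw [h0] at hδ0
    rw [h1] at hδ1
    exact ⟨⟨fun _ => hδ1, fun _ => by linarith⟩, ⟨fun _ => rfl, fun _ => hδ1⟩,
      ⟨fun _ => hδ0, fun _ => rfl⟩⟩
  · have h1 := hδ1 ▸ one_sub_sqrt_three_le_eigenvalues₀_one hn hconn hG
    have h0 := hδ0 ▸ card_sub_one_lt_eigenvalues₀_zero (by omega) hconn hG
    exact ⟨⟨fun h => by linarith, fun h => by linarith⟩,
      ⟨fun h => by linarith, fun h => absurd h hG⟩, ⟨fun h => absurd h hG, fun h => by linarith⟩⟩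
end

section
/- Let Γ be a connected graph with diameter D and exactly three distinct distance eigenvalues δ_0 > δ_1 > δ_2. There exists an eigenvector α of the distance matrix for δ_0 such that for any two distinct vertices x, y: Σ_{0≤i,j≤D} (i-j)² ν_{ij}(x,y) = -2(δ_1 + δ_2)d(x,y) - 2δ_1δ_2 + (α_x - α_y)², where ν_{ij}(x,y) = #{z : d(x,z)=i and d(y,z)=j}. -/
open SimpleGraph Matrix Finset

section conj
variable {V : Type*} [Fintype V] [DecidableEq V] (U : Matrix V V ℝ)

noncomputable def conjD (d : V → ℝ) : Matrix V V ℝ := U * Matrix.diagonal d * star U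

lemma conjD_apply (d : V → ℝ) (x y : V) : conjD U d x y = ∑ k, U x k * d k * U y k := by
  rw [conjD, Matrix.mul_assoc, Matrix.mul_apply]
  refine Finset.sum_congr rfl fun k _ => ?_
  rw [Matrix.mul_apply]
  simp only [Matrix.diagonal_apply, ite_mul, zero_mul, Finset.sum_ite_eq, Finset.mem_univ,
    if_true, Matrix.star_apply, star_trivial]
  ring

lemma conjD_mul (hU : star U * U = 1) (d e : V → ℝ) :
    conjD U d * conjD U e = conjD U (d * e) := by
  simp only [conjD, Matrix.mul_assoc]
  rw [← Matrix.mul_assoc (star U) U, hU, Matrix.one_mul,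
    ← Matrix.mul_assoc (diagonal d), Matrix.diagonal_mul_diagonal]
  rfl

lemma conjD_smul (c : ℝ) (d : V → ℝ) : c • conjD U d = conjD U (c • d) := by
  ext x y
  simp only [Matrix.smul_apply, conjD_apply, smul_eq_mul, Finset.mul_sum, Pi.smul_apply]
  exact Finset.sum_congr rfl fun k _ => by ring

lemma conjD_add (d e : V → ℝ) : conjD U d + conjD U e = conjD U (d + e) := by
  ext x y
  simp only [Matrix.add_apply, conjD_apply, Pi.add_apply, ← Finset.sum_add_distrib]
  exact Finset.sum_congr rfl fun k _ => by ring

lemma conjD_sub (d e : V → ℝ) : conjD U d - conjD U e = conjD U (d - e) := by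
  ext x y
  simp only [Matrix.sub_apply, conjD_apply, Pi.sub_apply, ← Finset.sum_sub_distrib]
  exact Finset.sum_congr rfl fun k _ => by ring

lemma conjD_one (hU' : U * star U = 1) : conjD U 1 = 1 := by
  rw [conjD, show (1 : V → ℝ) = fun _ => (1:ℝ) from rfl, Matrix.diagonal_one, Matrix.mul_one]
  exact hU'

lemma conjD_symm (d : V → ℝ) (x y : V) : conjD U d x y = conjD U d y x := by
  simp only [conjD_apply]
  exact Finset.sum_congr rfl fun k _ => by ring

lemma conjD_trace (hU : star U * U = 1) (d : V → ℝ) : (conjD U d).trace = ∑ k, d k := by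
  rw [conjD, Matrix.trace_mul_comm, ← Matrix.mul_assoc, hU, Matrix.one_mul, Matrix.trace_diagonal]
end conj

lemma pf_aux {V : Type*} [Fintype V] [DecidableEq V]
    (A : Matrix V V ℝ) (hnn : ∀ x y, 0 ≤ A x y)
    (hoff : ∀ x y : V, x ≠ y → 0 < A x y)
    (δ0 : ℝ) (N : Matrix V V ℝ) (hN : Nᵀ = N)
    (hB : δ0 • (1 : Matrix V V ℝ) - A = N * N)
    (v : V → ℝ) (hv : A *ᵥ v = δ0 • v) (a : V) (hva : v a = 0) : v = 0 := by
  set w : V → ℝ := fun z => |v z| with hw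
  have hww : w ⬝ᵥ w = v ⬝ᵥ v := by
    simp [dotProduct, hw, abs_mul_abs_self]
  have hvAv : v ⬝ᵥ (A *ᵥ v) = δ0 * (w ⬝ᵥ w) := by
    rw [hv, dotProduct_smul, hww]; rfl
  have h1 : v ⬝ᵥ (A *ᵥ v) ≤ w ⬝ᵥ (A *ᵥ w) := by
    simp only [dotProduct, mulVec, dotProduct, Finset.mul_sum]
    refine Finset.sum_le_sum fun x _ => Finset.sum_le_sum fun y _ => ?_
    calc v x * (A x y * v y) ≤ |v x * (A x y * v y)| := le_abs_self _
      _ = w x * (A x y * w y) := by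
          rw [abs_mul, abs_mul, abs_of_nonneg (hnn x y)]
  have h2 : w ⬝ᵥ ((δ0 • (1 : Matrix V V ℝ) - A) *ᵥ w) ≤ 0 := by
    rw [sub_mulVec, dotProduct_sub, smul_mulVec, one_mulVec, dotProduct_smul]
    have := le_trans (le_of_eq hvAv.symm) h1
    simp only [smul_eq_mul]
    linarith
  have h3 : (N *ᵥ w) ⬝ᵥ (N *ᵥ w) = w ⬝ᵥ ((δ0 • (1 : Matrix V V ℝ) - A) *ᵥ w) := by
    rw [hB, ← Matrix.mulVec_mulVec, Matrix.dotProduct_mulVec w N, ← Matrix.mulVec_transpose, hN]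
  have h4 : N *ᵥ w = 0 := by
    have h5 : (N *ᵥ w) ⬝ᵥ (N *ᵥ w) = 0 :=
      le_antisymm (h3 ▸ h2) (Finset.sum_nonneg fun i _ => mul_self_nonneg _)
    exact dotProduct_self_eq_zero.mp h5
  have hAw : A *ᵥ w = δ0 • w := by
    have : (δ0 • (1 : Matrix V V ℝ) - A) *ᵥ w = 0 := by
      rw [hB, ← Matrix.mulVec_mulVec, h4, Matrix.mulVec_zero]
    rw [sub_mulVec, smul_mulVec, one_mulVec, sub_eq_zero] at this
    exact this.symm
  have hwa : w a = 0 := by simp [hw, hva]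
  have hAwa : ∑ z, A a z * w z = 0 := by
    have := congrFun hAw a
    simpa [mulVec, dotProduct, hwa] using this
  have hz : ∀ z ∈ Finset.univ, A a z * w z = 0 := by
    rw [← Finset.sum_eq_zero_iff_of_nonneg fun z _ => mul_nonneg (hnn a z) (abs_nonneg _)]
    exact hAwa
  funext z
  by_cases hza : z = a
  · simpa [hza] using hva
  · have h6 := hz z (Finset.mem_univ z)
    have hpos := hoff a z (Ne.symm hza)
    have : w z = 0 := by
      rcases mul_eq_zero.mp h6 with h | h
      · exact absurd h (ne_of_gt hpos)
      · exact h
    simpa [hw, abs_eq_zero] using this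

theorem dcube_stmt12 {V : Type*} [Fintype V] [DecidableEq V] (G : SimpleGraph V)
    (hconn : G.Connected) (δ0 δ1 δ2 : ℝ) (h21 : δ2 < δ1) (h10 : δ1 < δ0)
    (hspec : (distSpec G).toFinset = {δ0, δ1, δ2}) :
    ∃ α : V → ℝ, distMatrix G *ᵥ α = δ0 • α ∧
      ∀ x y : V, x ≠ y →
        ∑ i ∈ Finset.range (G.diam + 1), ∑ j ∈ Finset.range (G.diam + 1),
          ((i : ℝ) - (j : ℝ)) ^ 2 *
            ((Finset.univ.filter fun z => G.dist x z = i ∧ G.dist y z = j).card : ℝ)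
        = -2 * (δ1 + δ2) * (G.dist x y : ℝ) - 2 * (δ1 * δ2) + (α x - α y) ^ 2 := by
  classical
  set A : Matrix V V ℝ := distMatrix G with hAdef
  have hA : A.IsHermitian := distMatrix_isHermitian G
  set ψ : V → ℝ := hA.eigenvalues with hψdef
  set U : Matrix V V ℝ := (hA.eigenvectorUnitary : Matrix V V ℝ) with hUdef
  have hU : star U * U = 1 := Matrix.mem_unitaryGroup_iff'.mp hA.eigenvectorUnitary.2
  have hU' : U * star U = 1 := Matrix.mem_unitaryGroup_iff.mp hA.eigenvectorUnitary.2
  have hAeq : A = conjD U ψ := by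
    have hid : (RCLike.ofReal ∘ ψ) = ψ := by
      funext k
      simp [RCLike.ofReal_real_eq_id]
    have h := hA.spectral_theorem
    rw [conjD, ← hid]
    exact h
  have hApp : ∀ x y, A x y = (G.dist x y : ℝ) := fun x y => rfl
  have hAnn : ∀ x y, 0 ≤ A x y := fun x y => by rw [hApp]; positivity
  have hAoff : ∀ x y : V, x ≠ y → 0 < A x y := by
    intro x y hxy
    rw [hApp]
    exact_mod_cast hconn.pos_dist_of_ne hxy
  -- eigenvalues are among the three
  have hmem : ∀ k, ψ k = δ0 ∨ ψ k = δ1 ∨ ψ k = δ2 := by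
    intro k
    have h : ψ k ∈ (distSpec G).toFinset := by
      rw [Multiset.mem_toFinset]
      exact Multiset.mem_map.mpr ⟨k, Finset.mem_val.mpr (Finset.mem_univ k), rfl⟩
    rw [hspec] at h
    simpa using h
  have hex : ∃ k, ψ k = δ0 := by
    have h : δ0 ∈ (distSpec G).toFinset := by rw [hspec]; simp
    rw [Multiset.mem_toFinset] at h
    obtain ⟨k, _, hk⟩ := Multiset.mem_map.mp h
    exact ⟨k, hk⟩
  obtain ⟨k0, hk0⟩ := hex
  set p : V → ℝ := fun k => (ψ k - δ1) * (ψ k - δ2) with hpdef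
  set c : ℝ := (δ0 - δ1) * (δ0 - δ2) with hcdef
  have hc : 0 < c := mul_pos (by linarith) (by linarith)
  have hker : ∀ k, ψ k ≠ δ0 → p k = 0 := by
    intro k hk
    rcases hmem k with h | h | h
    · exact absurd h hk
    · simp [hpdef, h]
    · simp [hpdef, h]
  have hpval : ∀ k, p k = 0 ∨ p k = c := by
    intro k
    by_cases h : ψ k = δ0
    · right; rw [hpdef]; simp only; rw [h]
    · left; exact hker k h
  have hpnn : ∀ k, 0 ≤ p k := by
    intro k
    rcases hpval k with h | h <;> rw [h]
    · exact le_of_lt hc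
  set M : Matrix V V ℝ := conjD U p with hMdef
  have hMpoly : M = A * A - (δ1 + δ2) • A + (δ1 * δ2) • (1 : Matrix V V ℝ) := by
    rw [hMdef, hAeq, conjD_mul U hU, conjD_smul, ← conjD_one U hU', conjD_smul,
      conjD_sub, conjD_add]
    refine congrArg (conjD U) (funext fun k => ?_)
    simp only [Pi.add_apply, Pi.sub_apply, Pi.mul_apply, Pi.smul_apply, Pi.one_apply,
      smul_eq_mul, hpdef]
    ring
  have hAM : A * M = δ0 • M := by
    rw [hMdef, hAeq, conjD_mul U hU, conjD_smul]
    refine congrArg (conjD U) (funext fun k => ?_)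
    simp only [Pi.mul_apply, Pi.smul_apply, smul_eq_mul]
    by_cases h : ψ k = δ0
    · rw [h]
    · rw [hker k h, mul_zero, mul_zero]
  have hMM : M * M = c • M := by
    rw [hMdef, conjD_mul U hU, conjD_smul]
    refine congrArg (conjD U) (funext fun k => ?_)
    simp only [Pi.mul_apply, Pi.smul_apply, smul_eq_mul]
    rcases hpval k with h | h <;> rw [h] <;> ring
  have hMsymm : ∀ x y, M x y = M y x := fun x y => conjD_symm U p x y
  -- the PSD witness
  set N : Matrix V V ℝ := conjD U (fun k => Real.sqrt (δ0 - ψ k)) with hNdef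
  have hNsym : Nᵀ = N := by
    ext x y
    rw [Matrix.transpose_apply]
    exact conjD_symm U _ y x
  have hBN : δ0 • (1 : Matrix V V ℝ) - A = N * N := by
    rw [hNdef, conjD_mul U hU, hAeq, ← conjD_one U hU', conjD_smul, conjD_sub]
    refine congrArg (conjD U) (funext fun k => ?_)
    simp only [Pi.mul_apply, Pi.sub_apply, Pi.smul_apply, Pi.one_apply, smul_eq_mul, mul_one]
    rw [Real.mul_self_sqrt]
    rcases hmem k with h | h | h <;> rw [h] <;> linarith
  -- a diagonal entry of M is nonzero
  have htr : 0 < M.trace := by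
    rw [hMdef, conjD_trace U hU]
    have h1 : c ≤ ∑ k, p k := by
      have : p k0 = c := by rw [hpdef]; simp only; rw [hk0]
      rw [← this]
      exact Finset.single_le_sum (fun k _ => hpnn k) (Finset.mem_univ k0)
    linarith
  have hex2 : ∃ a, M a a ≠ 0 := by
    by_contra h
    push_neg at h
    rw [Matrix.trace] at htr
    simp only [Matrix.diag] at htr
    rw [Finset.sum_congr rfl fun a _ => h a] at htr
    simp at htr
  obtain ⟨a, ha⟩ := hex2
  -- columns of M are δ0-eigenvectors
  have hcolEig : ∀ y, A *ᵥ (fun x => M x y) = δ0 • (fun x => M x y) := by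
    intro y
    funext x
    have h := congrFun (congrFun hAM x) y
    simpa [Matrix.mul_apply, Matrix.smul_apply, mulVec, dotProduct] using h
  have pf := pf_aux A hAnn hAoff δ0 N hNsym hBN
  have hMne : ∀ x, M x a ≠ 0 := by
    intro x hx
    have h := pf (fun z => M z a) (hcolEig a) x hx
    exact ha (congrFun h a)
  have hprop : ∀ y x, M x y = M x a * M y a / M a a := by
    intro y x
    set t : ℝ := M a y / M a a with htdef
    have heig : A *ᵥ (fun z => M z y - t * M z a) = δ0 • (fun z => M z y - t * M z a) := by
      have he : (fun z => M z y - t * M z a)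
          = (fun z => M z y) - t • (fun z => M z a) := rfl
      rw [he, Matrix.mulVec_sub, Matrix.mulVec_smul, hcolEig, hcolEig, smul_sub, smul_comm]
    have hzero : (fun z => M z y - t * M z a) = 0 := by
      refine pf _ heig a ?_
      simp only [htdef]
      rw [div_mul_cancel₀ _ (hMne a)]
      exact sub_self _
    have h := congrFun hzero x
    simp only [Pi.zero_apply, sub_eq_zero] at h
    rw [h, htdef, hMsymm a y]
    ring
  have hMaa_pos : 0 < M a a := by
    have h := congrFun (congrFun hMM a) a
    have h1 : (M * M) a a = ∑ k, (M k a) ^ 2 := by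
      rw [Matrix.mul_apply]
      exact Finset.sum_congr rfl fun k _ => by rw [hMsymm a k]; ring
    have h2 : (0:ℝ) < ∑ k, (M k a) ^ 2 := by
      have : (0:ℝ) < (M a a) ^ 2 := by positivity
      refine lt_of_lt_of_le this ?_
      exact Finset.single_le_sum (f := fun k => (M k a) ^ 2) (fun k _ => sq_nonneg _) (Finset.mem_univ a)
    rw [h1] at h
    have h3 : c * M a a > 0 := by
      rw [Matrix.smul_apply, smul_eq_mul] at h
      linarith [h ▸ h2]
    nlinarith
  set α : V → ℝ := fun x => M x a / Real.sqrt (M a a) with hαdef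
  have hMα : ∀ x y, M x y = α x * α y := by
    intro x y
    rw [hprop y x, hαdef]
    simp only
    rw [div_mul_div_comm, Real.mul_self_sqrt hMaa_pos.le]
  have hαeig : A *ᵥ α = δ0 • α := by
    have he : α = (Real.sqrt (M a a))⁻¹ • (fun x => M x a) := by
      funext x
      simp [hαdef, div_eq_inv_mul, mul_comm]
    rw [he, Matrix.mulVec_smul, hcolEig, smul_comm]
  refine ⟨α, hαeig, ?_⟩
  intro x y hxy
  -- diameter bound
  have hediam : G.ediam ≠ ⊤ := by
    have hne : Nonempty V := ⟨a⟩
    have hle : G.ediam ≤ (Finset.univ : Finset (V × V)).sup (fun q => G.edist q.1 q.2) := by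
      rw [SimpleGraph.ediam_def]
      exact iSup_le fun q => Finset.le_sup (f := fun q : V × V => G.edist q.1 q.2)
        (Finset.mem_univ q)
    have hall : ∀ q ∈ (Finset.univ : Finset (V × V)), G.edist q.1 q.2 < ⊤ := by
      intro q _
      rw [lt_top_iff_ne_top]
      exact (SimpleGraph.edist_ne_top_iff_reachable).mpr (hconn.preconnected q.1 q.2)
    have hlt : (Finset.univ : Finset (V × V)).sup (fun q => G.edist q.1 q.2) < ⊤ :=
      (Finset.sup_lt_iff (bot_lt_iff_ne_bot.mpr (by simp))).mpr hall
    intro htop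
    rw [htop] at hle
    exact absurd hle (not_le_of_gt hlt)
  have hdle : ∀ u w : V, G.dist u w ∈ Finset.range (G.diam + 1) := by
    intro u w
    rw [Finset.mem_range, Nat.lt_succ_iff]
    exact SimpleGraph.dist_le_diam hediam
  have hmaps : ∀ z ∈ (Finset.univ : Finset V),
      (G.dist x z, G.dist y z) ∈ Finset.range (G.diam + 1) ×ˢ Finset.range (G.diam + 1) := by
    intro z _
    rw [Finset.mem_product]
    exact ⟨hdle x z, hdle y z⟩
  have hfib := Finset.sum_fiberwise_of_maps_to hmaps
      (fun z => (A x z - A y z) ^ 2)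
  have hLHS : ∑ i ∈ Finset.range (G.diam + 1), ∑ j ∈ Finset.range (G.diam + 1),
      ((i : ℝ) - (j : ℝ)) ^ 2 *
        ((Finset.univ.filter fun z => G.dist x z = i ∧ G.dist y z = j).card : ℝ)
      = ∑ z, (A x z - A y z) ^ 2 := by
    rw [← hfib, Finset.sum_product]
    refine Finset.sum_congr rfl fun i hi => Finset.sum_congr rfl fun j hj => ?_
    have hset : (Finset.univ.filter fun z => (G.dist x z, G.dist y z) = (i, j))
        = Finset.univ.filter fun z => G.dist x z = i ∧ G.dist y z = j := by
      apply Finset.filter_congr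
      intro z _
      simp [Prod.ext_iff]
    rw [hset]
    rw [Finset.sum_congr rfl (fun z hz => by
      obtain ⟨h1, h2⟩ := (Finset.mem_filter.mp hz).2
      rw [show (A x z - A y z) ^ 2 = ((i : ℝ) - (j : ℝ)) ^ 2 by
        rw [hApp, hApp, h1, h2]])]
    rw [Finset.sum_const, nsmul_eq_mul, mul_comm]
  have hAA : ∀ u w : V, (A * A) u w = ∑ z, A u z * A w z := by
    intro u w
    rw [Matrix.mul_apply]
    refine Finset.sum_congr rfl fun z _ => ?_
    rw [hApp z w, hApp w z, SimpleGraph.dist_comm]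
  have hsum2 : ∑ z, (A x z - A y z) ^ 2
      = (A * A) x x + (A * A) y y - 2 * ((A * A) x y) := by
    rw [hAA, hAA, hAA, ← Finset.sum_add_distrib, Finset.mul_sum, ← Finset.sum_sub_distrib]
    refine Finset.sum_congr rfl fun z _ => ?_
    ring
  have hx0 : A x x = 0 := by rw [hApp]; simp
  have hy0 : A y y = 0 := by rw [hApp]; simp
  have hxx : (A * A) x x = α x * α x - δ1 * δ2 := by
    have h := congrFun (congrFun hMpoly x) x
    simp only [Matrix.add_apply, Matrix.sub_apply, Matrix.smul_apply, smul_eq_mul,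
      Matrix.one_apply_eq] at h
    rw [hMα x x, hx0] at h
    linarith
  have hyy : (A * A) y y = α y * α y - δ1 * δ2 := by
    have h := congrFun (congrFun hMpoly y) y
    simp only [Matrix.add_apply, Matrix.sub_apply, Matrix.smul_apply, smul_eq_mul,
      Matrix.one_apply_eq] at h
    rw [hMα y y, hy0] at h
    linarith
  have hxy2 : (A * A) x y = α x * α y + (δ1 + δ2) * A x y := by
    have h := congrFun (congrFun hMpoly x) y
    simp only [Matrix.add_apply, Matrix.sub_apply, Matrix.smul_apply, smul_eq_mul,
      Matrix.one_apply_ne hxy] at h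
    rw [hMα x y] at h
    linarith
  rw [hLHS, hsum2, hxx, hyy, hxy2, hApp x y]
  ring
end

section
/- The distance matrix of the d-cube Q_d (d ≥ 1) has eigenvalues d·2^{d-1} with multiplicity 1, 0 with multiplicity 2^d - d - 1, and -2^{d-1} with multiplicity d. -/
open SimpleGraph Matrix Finset

/-- The `d`-cube: vertices are binary `d`-tuples, adjacent iff they differ in one coordinate. -/
def cubeGraph (d : ℕ) : SimpleGraph (Fin d → Bool) where
  Adj x y := hammingDist x y = 1
  symm := ⟨fun x y h => by show hammingDist y x = 1; rwa [hammingDist_comm]⟩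
  loopless := ⟨fun x h => by simp [hammingDist_self] at h⟩

/-!
Index the characters of `(ℤ/2)^d` by `w : Fin d → Bool`, `χ_w(x) = ∏ᵢ (-1)^(wᵢ xᵢ)`. Since
`hammingDist x y = ∑ᵢ (1 - χ_{eᵢ}(x) χ_{eᵢ}(y)) / 2`, orthogonality of characters shows that every
`χ_w` is an eigenvector of the distance matrix, with eigenvalue `d 2^(d-1)` for `w = 0`,
`-2^(d-1)` for the `d` unit vectors `w = eᵢ`, and `0` otherwise. The matrix of characters squares
to `2^d • 1`, so it diagonalises the distance matrix.
-/

open Polynomial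
open scoped symmDiff

theorem Matrix.IsHermitian.map_eigenvalues_eq_of_mul_eq {n 𝕜 : Type*} [Fintype n] [DecidableEq n]
    [RCLike 𝕜] {A P : Matrix n n 𝕜} (hA : A.IsHermitian) (hP : IsUnit P) (μ : n → ℝ)
    (h : A * P = P * diagonal fun i => (μ i : 𝕜)) :
    univ.val.map hA.eigenvalues = univ.val.map μ := by
  have hconj : A = hP.unit.val * diagonal (fun i => (μ i : 𝕜)) * hP.unit.val⁻¹ := by
    rw [IsUnit.unit_spec, ← h, Matrix.mul_assoc,
      mul_nonsing_inv _ ((isUnit_iff_isUnit_det _).1 hP), Matrix.mul_one]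
  have hcharpoly :
      A.charpoly = (((univ.val.map μ).map RCLike.ofReal).map fun a : 𝕜 => X - C a).prod := by
    rw [hconj, charpoly_units_conj, charpoly_diagonal, prod_eq_multiset_prod,
      Multiset.map_map, Multiset.map_map]
    rfl
  have hroots := hA.roots_charpoly_eq_eigenvalues
  rw [hcharpoly, roots_multiset_prod_X_sub_C, ← Multiset.map_map] at hroots
  exact (Multiset.map_injective RCLike.ofReal_injective hroots).symm

lemma Finset.map_val_eq_replicate_add_map_filter_not {α β : Type*} (s : Finset α) (p : α → Prop)
    [DecidablePred p] {f : α → β} {b : β} (h : ∀ a ∈ s, p a → f a = b) :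
    s.val.map f = Multiset.replicate #(s.filter p) b + (s.filter fun a => ¬ p a).val.map f := by
  conv_lhs => rw [← Multiset.filter_add_not p s.val]
  rw [Multiset.map_add, ← filter_val, ← filter_val,
    Multiset.map_congr rfl fun a ha => h a (mem_filter.1 ha).1 (mem_filter.1 ha).2,
    Multiset.map_const', card_val]

section Walsh

variable {ι : Type*}

def boolSign (b : Bool) : ℝ := if b then -1 else 1

lemma boolSign_xor (a b : Bool) : boolSign (xor a b) = boolSign a * boolSign b := by
  cases a <;> cases b <;> norm_num [boolSign]

section Characters

variable [Fintype ι]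

def walshChar (w x : ι → Bool) : ℝ := ∏ i, boolSign (w i && x i)

lemma walshChar_comm (w x : ι → Bool) : walshChar w x = walshChar x w := by
  simp only [walshChar, Bool.and_comm]

lemma walshChar_mul_walshChar (v w x : ι → Bool) :
    walshChar v x * walshChar w x = walshChar (v ∆ w) x := by
  simp only [walshChar, ← prod_mul_distrib, ← boolSign_xor, Pi.symmDiff_apply,
    Bool.symmDiff_eq_xor, Bool.and_xor_distrib_right]

@[simp]
lemma walshChar_bot (x : ι → Bool) : walshChar ⊥ x = 1 := by
  simp [walshChar, boolSign]

lemma hammingDist_eq_sum_boolSign (x y : ι → Bool) :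
    (hammingDist x y : ℝ) = ∑ i, (1 - boolSign (x i) * boolSign (y i)) / 2 := by
  rw [hammingDist, card_filter, Nat.cast_sum]
  refine sum_congr rfl fun i _ => ?_
  cases x i <;> cases y i <;> norm_num [boolSign]

end Characters

variable [DecidableEq ι]

def boolSingle (i : ι) : ι → Bool := fun j => decide (j = i)

lemma boolSingle_injective : Function.Injective (boolSingle (ι := ι)) := fun i _ h => by
  simpa [boolSingle] using congrFun h i

lemma boolSingle_ne_bot (i : ι) : boolSingle i ≠ ⊥ := fun h => by
  simpa [boolSingle] using congrFun h i

variable [Fintype ι]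

lemma walshChar_boolSingle (i : ι) (x : ι → Bool) :
    walshChar (boolSingle i) x = boolSign (x i) := by
  rw [walshChar, Fintype.prod_eq_single i fun j hj => by simp [boolSingle, hj, boolSign]]
  simp [boolSingle]

lemma sum_walshChar (w : ι → Bool) :
    ∑ x, walshChar w x = if w = ⊥ then 2 ^ Fintype.card ι else 0 := by
  have hfactor : ∑ x, walshChar w x = ∏ i, ∑ b, boolSign (w i && b) := by
    rw [Fintype.prod_sum]
    rfl
  rw [hfactor]
  split_ifs with hw
  · simp [hw, boolSign]
  · obtain ⟨i, hi⟩ : ∃ i, w i = true := by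
      by_contra! h
      exact hw (funext fun i => by simpa using h i)
    exact prod_eq_zero (mem_univ i) (by simp [hi, boolSign])

def walshMatrix : Matrix (ι → Bool) (ι → Bool) ℝ := Matrix.of walshChar

lemma walshMatrix_mul_self :
    walshMatrix * walshMatrix = (2 ^ Fintype.card ι : ℝ) • (1 : Matrix (ι → Bool) (ι → Bool) ℝ) := by
  ext x z
  simp only [mul_apply, walshMatrix, of_apply, Matrix.smul_apply, one_apply, smul_eq_mul]
  simp_rw [walshChar_comm _ z, walshChar_mul_walshChar, sum_walshChar, symmDiff_eq_bot]
  split_ifs <;> simp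

lemma isUnit_walshMatrix : IsUnit (walshMatrix (ι := ι)) := by
  refine (isUnit_iff_isUnit_det _).2 <| isUnit_det_of_right_inverse
    (B := (2 ^ Fintype.card ι : ℝ)⁻¹ • walshMatrix) ?_
  rw [Matrix.mul_smul, walshMatrix_mul_self, smul_smul, inv_mul_cancel₀ (by positivity), one_smul]

end Walsh

section HammingSpectrum

variable {ι : Type*} [Fintype ι] [DecidableEq ι]

def hammingEigenvalue (w : ι → Bool) : ℝ :=
  if w = ⊥ then Fintype.card ι * 2 ^ (Fintype.card ι - 1)
  else if ∃ i, boolSingle i = w then -2 ^ (Fintype.card ι - 1) else 0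

lemma sum_hammingDist_mul_walshChar (x w : ι → Bool) :
    ∑ y, (hammingDist x y : ℝ) * walshChar w y =
      ∑ i, ((if w = ⊥ then 2 ^ Fintype.card ι else 0) -
        boolSign (x i) * if boolSingle i = w then 2 ^ Fintype.card ι else 0) / 2 := by
  have hexpand : ∀ y, (hammingDist x y : ℝ) * walshChar w y =
      ∑ i, (walshChar w y - boolSign (x i) * walshChar (boolSingle i ∆ w) y) / 2 := fun y => by
    rw [hammingDist_eq_sum_boolSign, sum_mul]
    refine sum_congr rfl fun i _ => ?_
    rw [← walshChar_mul_walshChar, walshChar_boolSingle]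
    ring
  simp only [hexpand]
  rw [sum_comm]
  refine sum_congr rfl fun i _ => ?_
  rw [← sum_div, sum_sub_distrib, ← mul_sum, sum_walshChar, sum_walshChar]
  simp only [symmDiff_eq_bot]

lemma sum_hammingDist_mul_walshChar_eq (x w : ι → Bool) :
    ∑ y, (hammingDist x y : ℝ) * walshChar w y = hammingEigenvalue w * walshChar w x := by
  rw [sum_hammingDist_mul_walshChar, hammingEigenvalue]
  split_ifs with hbot hsingle
  · subst hbot
    rcases Nat.eq_zero_or_pos (Fintype.card ι) with hι | hι
    · have : IsEmpty ι := Fintype.card_eq_zero_iff.1 hι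
      simp
    · simp [boolSingle_ne_bot, pow_sub₀ (2 : ℝ) two_ne_zero hι, div_eq_mul_inv]
  · obtain ⟨k, rfl⟩ := hsingle
    rw [Fintype.sum_eq_single k fun i hi => by simp [boolSingle_injective.ne hi],
      walshChar_boolSingle, pow_sub₀ (2 : ℝ) two_ne_zero (Fintype.card_pos_iff.2 ⟨k⟩)]
    simp only [if_true]
    ring
  · push Not at hsingle
    simp [hsingle]

lemma filter_ne_bot_exists_boolSingle :
    (univ.filter fun w : ι → Bool => ¬ w = ⊥ ∧ ∃ i, boolSingle i = w) = univ.image boolSingle := by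
  ext w
  simp only [mem_filter, mem_univ, true_and, mem_image]
  exact ⟨fun h => h.2, fun h => ⟨by obtain ⟨i, rfl⟩ := h; exact boolSingle_ne_bot i, h⟩⟩

lemma map_hammingEigenvalue :
    univ.val.map (hammingEigenvalue (ι := ι)) =
      Multiset.replicate 1 ((Fintype.card ι : ℝ) * 2 ^ (Fintype.card ι - 1)) +
      Multiset.replicate (2 ^ Fintype.card ι - Fintype.card ι - 1) (0 : ℝ) +
      Multiset.replicate (Fintype.card ι) (-(2 ^ (Fintype.card ι - 1) : ℝ)) := by
  have hbot : #(univ.filter fun w : ι → Bool => w = ⊥) = 1 := by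
    rw [filter_eq', if_pos (mem_univ _), card_singleton]
  have hsingles : #((univ.filter fun w : ι → Bool => ¬ w = ⊥).filter
      fun w => ∃ i, boolSingle i = w) = Fintype.card ι := by
    rw [filter_filter, filter_ne_bot_exists_boolSingle,
      card_image_of_injective _ boolSingle_injective, card_univ]
  have hrest : #((univ.filter fun w : ι → Bool => ¬ w = ⊥).filter
      fun w => ¬ ∃ i, boolSingle i = w) = 2 ^ Fintype.card ι - Fintype.card ι - 1 := by
    have htotal := card_filter_add_card_filter_not (s := (univ : Finset (ι → Bool))) (· = ⊥)
    have hnonzero := card_filter_add_card_filter_not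
      (s := univ.filter fun w : ι → Bool => ¬ w = ⊥) (fun w => ∃ i, boolSingle i = w)
    simp only [card_univ, Fintype.card_fun, Fintype.card_bool] at htotal
    omega
  rw [map_val_eq_replicate_add_map_filter_not _ (· = ⊥) fun w _ hw => by
      rw [hammingEigenvalue, if_pos hw],
    map_val_eq_replicate_add_map_filter_not _ (fun w => ∃ i, boolSingle i = w) fun w hw hs => by
      rw [hammingEigenvalue, if_neg (mem_filter.1 hw).2, if_pos hs],
    Multiset.map_congr rfl fun w hw => by
      rw [hammingEigenvalue, if_neg (mem_filter.1 (mem_filter.1 hw).1).2,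
        if_neg (mem_filter.1 hw).2],
    Multiset.map_const', card_val, hbot, hsingles, hrest]
  abel

end HammingSpectrum

section Cube

variable {d : ℕ}

lemma exists_adj_hammingDist_succ {x y : Fin d → Bool} (hxy : x ≠ y) :
    ∃ z, (cubeGraph d).Adj x z ∧ hammingDist z y + 1 = hammingDist x y := by
  obtain ⟨i, hi⟩ := Function.ne_iff.1 hxy
  refine ⟨Function.update x i (y i), ?_, ?_⟩
  · show hammingDist _ _ = 1
    rw [hammingDist, card_eq_one]
    refine ⟨i, ?_⟩
    ext j
    by_cases hj : j = i
    · subst hj; simp [hi]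
    · simp [hj]
  · have hfilter : ({j | Function.update x i (y i) j ≠ y j} : Finset (Fin d)) =
        ({j | x j ≠ y j} : Finset (Fin d)).erase i := by
      ext j
      by_cases hj : j = i
      · subst hj; simp
      · simp [hj]
    rw [hammingDist, hammingDist, hfilter, card_erase_add_one (by simpa using hi)]

lemma exists_walk_length_eq_hammingDist (x y : Fin d → Bool) :
    ∃ p : (cubeGraph d).Walk x y, p.length = hammingDist x y := by
  induction h : hammingDist x y generalizing x with
  | zero =>
    obtain rfl := hammingDist_eq_zero.1 h
    exact ⟨.nil, rfl⟩
  | succ n ih =>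
    obtain ⟨z, hxz, hzy⟩ := exists_adj_hammingDist_succ (hammingDist_pos.1 (by omega : 0 < hammingDist x y))
    obtain ⟨p, hp⟩ := ih z (by omega)
    exact ⟨.cons hxz p, by rw [Walk.length_cons, hp]⟩

lemma hammingDist_le_length {x y : Fin d → Bool} (p : (cubeGraph d).Walk x y) :
    hammingDist x y ≤ p.length := by
  induction p with
  | nil => simp
  | @cons u v w huv q ih =>
    calc hammingDist u w ≤ hammingDist u v + hammingDist v w := hammingDist_triangle _ _ _
      _ ≤ q.length + 1 := by rw [show hammingDist u v = 1 from huv]; omega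
      _ = _ := (Walk.length_cons _ _).symm

lemma cubeGraph_dist (x y : Fin d → Bool) : (cubeGraph d).dist x y = hammingDist x y := by
  obtain ⟨p, hp⟩ := exists_walk_length_eq_hammingDist x y
  obtain ⟨q, hq⟩ := p.reachable.exists_walk_length_eq_dist
  exact le_antisymm (hp ▸ dist_le p) (hq ▸ hammingDist_le_length q)

lemma distMatrix_cubeGraph_mul_walshMatrix :
    distMatrix (cubeGraph d) * walshMatrix = walshMatrix * diagonal hammingEigenvalue := by
  ext x w
  rw [mul_diagonal, mul_apply]
  simp only [distMatrix, walshMatrix, of_apply, cubeGraph_dist]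
  simp_rw [walshChar_comm _ w]
  rw [mul_comm]
  exact sum_hammingDist_mul_walshChar_eq x w

end Cube

theorem dcube_stmt13_general (d : ℕ) :
    distSpec (cubeGraph d) =
      Multiset.replicate 1 ((d : ℝ) * 2 ^ (d - 1)) +
      Multiset.replicate (2 ^ d - d - 1) (0 : ℝ) +
      Multiset.replicate d (-(2 ^ (d - 1) : ℝ)) := by
  rw [distSpec, (distMatrix_isHermitian _).map_eigenvalues_eq_of_mul_eq isUnit_walshMatrix
    hammingEigenvalue distMatrix_cubeGraph_mul_walshMatrix, map_hammingEigenvalue, Fintype.card_fin]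

theorem dcube_stmt13 (d : ℕ) (hd : 1 ≤ d) :
    distSpec (cubeGraph d) =
      Multiset.replicate 1 ((d : ℝ) * 2 ^ (d - 1)) +
      Multiset.replicate (2 ^ d - d - 1) (0 : ℝ) +
      Multiset.replicate d (-(2 ^ (d - 1) : ℝ)) :=
  dcube_stmt13_general d
end
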